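/- arXiv:2206.10489 — 8 statements merged into one kernel-verified Lean document; each statement's English description precedes it below -/
import Mathlib

section
/- Let $D$ be a finite set, $p_0$ a strictly positive probability mass function on $D$, and let $u : D \to \mathbb{R}$ be any function. Write $\mathbb{E}_0[u] = \sum_s p_0(s) u(s)$ and $\mathbb{V}_0[u] = \sum_s p_0(s)(u(s) - \mathbb{E}_0[u])^2$. If $s_1 \in D$ attains the maximum of $u$, then $\frac{p_0(s_1)}{1 - p_0(s_1)} (u(s_1) - \mathbb{E}_0[u])^2 \leq \mathbb{V}_0[u]$ (where we assume $p_0(s_1) < 1$). -/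
/-- Expectation of `u` under the probability mass function `p`. -/
noncomputable def expct {D : Type*} [Fintype D] (p u : D → ℝ) : ℝ := ∑ s, p s * u s

/-- Variance of `u` under the probability mass function `p`. -/
noncomputable def var0 {D : Type*} [Fintype D] (p u : D → ℝ) : ℝ :=
  ∑ s, p s * (u s - expct p u) ^ 2

theorem stmt_2 {D : Type*} [Fintype D]
    (p0 : D → ℝ) (hpos : ∀ s, 0 < p0 s) (hsum : ∑ s, p0 s = 1)
    (u : D → ℝ) (s1 : D) (hmax : ∀ s, u s ≤ u s1) (h1 : p0 s1 < 1) :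
    p0 s1 / (1 - p0 s1) * (u s1 - expct p0 u) ^ 2 ≤ var0 p0 u := by
  classical
  set E := expct p0 u with hE
  set T := Finset.univ.erase s1 with hT
  set P := p0 s1 with hP
  set M := u s1 with hM
  have hAP : 0 < 1 - P := by linarith
  have hA : ∑ s ∈ T, p0 s = 1 - P := by
    have := Finset.sum_erase_add Finset.univ p0 (Finset.mem_univ s1)
    rw [hsum] at this
    linarith
  have hzero : ∑ s, p0 s * (u s - E) = 0 := by
    simp only [mul_sub, Finset.sum_sub_distrib, ← Finset.sum_mul, hsum, hE, expct]
    ring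
  have hB : ∑ s ∈ T, p0 s * (u s - E) = P * (E - M) := by
    have := Finset.sum_erase_add Finset.univ (fun s => p0 s * (u s - E))
      (Finset.mem_univ s1)
    rw [hzero] at this
    linear_combination this
  have key2 : (∑ s ∈ T, p0 s * (u s - E)) ^ 2 ≤
      (∑ s ∈ T, p0 s) * ∑ s ∈ T, p0 s * (u s - E) ^ 2 := by
    have h := T.sum_mul_sq_le_sq_mul_sq (fun s => Real.sqrt (p0 s))
      (fun s => Real.sqrt (p0 s) * (u s - E))
    have e1 : ∀ s, Real.sqrt (p0 s) * (Real.sqrt (p0 s) * (u s - E))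
        = p0 s * (u s - E) := by
      intro s
      rw [← mul_assoc, Real.mul_self_sqrt (hpos s).le]
    have e2 : ∀ s, Real.sqrt (p0 s) ^ 2 = p0 s := fun s => Real.sq_sqrt (hpos s).le
    have e3 : ∀ s, (Real.sqrt (p0 s) * (u s - E)) ^ 2 = p0 s * (u s - E) ^ 2 := by
      intro s
      rw [mul_pow, e2]
    simp only [e1, e2, e3] at h
    exact h
  rw [hB, hA] at key2
  have hvar : var0 p0 u = P * (M - E) ^ 2 + ∑ s ∈ T, p0 s * (u s - E) ^ 2 := by
    have := Finset.sum_erase_add Finset.univ (fun s => p0 s * (u s - E) ^ 2)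
      (Finset.mem_univ s1)
    simp only [var0, ← hE]
    linarith [this]
  rw [hvar, div_mul_eq_mul_div, div_le_iff₀ hAP]
  nlinarith [key2]
end

section
/- Let $D$ be a finite set with $|D| \geq 2$, $p_0$ a strictly positive probability mass function on $D$, $c > 1$ with $c < \min_{s \in D} 1/(1 - p_0(s))$, and set $d = c - 1$. Let $u : D \to \mathbb{R}$ be a nonconstant function. Then $\max_{s \in D} u(s) < \mathbb{E}_0[u] + \mathbb{S}_0[u]/\sqrt{d}$ and $\min_{s \in D} u(s) > \mathbb{E}_0[u] - \mathbb{S}_0[u]/\sqrt{d}$, where $\mathbb{S}_0[u]$ denotes the standard deviation of $u$ under $p_0$. -/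
/-- Standard deviation of `u` under the probability mass function `p`. -/
noncomputable def sdev {D : Type*} [Fintype D] (p u : D → ℝ) : ℝ :=
  Real.sqrt (var0 p u)

theorem stmt_3 {D : Type*} [Fintype D]
    (hD : 2 ≤ Fintype.card D)
    (p0 : D → ℝ) (hpos : ∀ s, 0 < p0 s) (hsum : ∑ s, p0 s = 1)
    (c : ℝ) (hc1 : 1 < c) (hc : ∀ s, c < 1 / (1 - p0 s))
    (d : ℝ) (hd : d = c - 1)
    (u : D → ℝ) (hu : ∃ s t, u s ≠ u t) :
    (∀ s, u s < expct p0 u + sdev p0 u / Real.sqrt d) ∧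
      (∀ s, expct p0 u - sdev p0 u / Real.sqrt d < u s) := by
  classical
  obtain ⟨s0, t0, hst⟩ := hu
  set E := expct p0 u with hE
  set V := var0 p0 u with hV
  have hd0 : 0 < d := by rw [hd]; linarith
  have hVpos : 0 < V := by
    have hw : ∃ w, u w ≠ E := by
      by_contra h
      push_neg at h
      exact hst (by rw [h s0, h t0])
    obtain ⟨w, hw⟩ := hw
    have hw' : u w - E ≠ 0 := sub_ne_zero.mpr hw
    refine Finset.sum_pos' (fun t _ => mul_nonneg (hpos t).le (sq_nonneg _))
      ⟨w, Finset.mem_univ w, mul_pos (hpos w) (sq_abs (u w - E) ▸ pow_pos (abs_pos.mpr hw') 2)⟩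
  have hsum0 : ∑ t, p0 t * (u t - E) = 0 := by
    simp_rw [mul_sub]
    rw [Finset.sum_sub_distrib, ← Finset.sum_mul, hsum, one_mul]
    simp [hE, expct]
  have key : ∀ s, (u s - E) ^ 2 < V / d := by
    intro s
    have hq := hpos s
    have h1q : 0 < 1 - p0 s := by
      by_contra h
      push_neg at h
      have : 1 / (1 - p0 s) ≤ 0 := by
        rcases eq_or_lt_of_le h with h' | h'
        · simp [h']
        · exact le_of_lt (div_neg_of_pos_of_neg one_pos h')
      linarith [hc s]
    have hcq : c * (1 - p0 s) < 1 := by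
      have := hc s
      rw [lt_div_iff₀ h1q] at this
      linarith
    have hdq : d * (1 - p0 s) < p0 s := by nlinarith
    set T := Finset.univ.erase s with hT
    have hA : ∑ t ∈ T, p0 t = 1 - p0 s := by
      rw [hT, Finset.sum_erase_eq_sub (Finset.mem_univ s), hsum]
    have hB : ∑ t ∈ T, p0 t * (u t - E) = -(p0 s * (u s - E)) := by
      rw [hT, Finset.sum_erase_eq_sub (Finset.mem_univ s), hsum0]
      ring
    have hC : ∑ t ∈ T, p0 t * (u t - E) ^ 2 = V - p0 s * (u s - E) ^ 2 := by
      rw [hT, Finset.sum_erase_eq_sub (Finset.mem_univ s)]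
      rfl
    have cauchy := Finset.sum_mul_sq_le_sq_mul_sq T (fun t => Real.sqrt (p0 t))
      (fun t => Real.sqrt (p0 t) * (u t - E))
    have e1 : ∀ t, Real.sqrt (p0 t) * (Real.sqrt (p0 t) * (u t - E)) = p0 t * (u t - E) :=
      fun t => by rw [← mul_assoc, Real.mul_self_sqrt (hpos t).le]
    have e2 : ∀ t, Real.sqrt (p0 t) ^ 2 = p0 t := fun t => Real.sq_sqrt (hpos t).le
    have e3 : ∀ t, (Real.sqrt (p0 t) * (u t - E)) ^ 2 = p0 t * (u t - E) ^ 2 :=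
      fun t => by rw [mul_pow, e2]
    simp only [e1, e2, e3] at cauchy
    rw [hA, hB, hC] at cauchy
    rw [lt_div_iff₀ hd0]
    nlinarith [sq_nonneg (u s - E), mul_pos hq hVpos]
  have hsd : sdev p0 u / Real.sqrt d = Real.sqrt (V / d) := by
    rw [Real.sqrt_div hVpos.le]
    rfl
  have habs : ∀ s, |u s - E| < sdev p0 u / Real.sqrt d := by
    intro s
    rw [hsd, ← Real.sqrt_sq_eq_abs]
    exact Real.sqrt_lt_sqrt (sq_nonneg _) (key s)
  constructor
  · intro s
    have := (abs_lt.mp (habs s)).2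
    linarith
  · intro s
    have := (abs_lt.mp (habs s)).1
    linarith
end

section
/- Let $D$ be a finite set with $|D|\geq 2$, $p_0$ a strictly positive probability mass function, $c>1$ with $c < \min_s 1/(1-p_0(s))$, $d = c-1$, and $u : D \to \mathbb{R}$ nonconstant. Define $\underline{p}(s) = p_0(s)\left(1 + \sqrt{d}\,\frac{\mathbb{E}_0[u] - u(s)}{\mathbb{S}_0[u]}\right)$. Then $\underline{p}$ is a probability mass function (i.e., $\underline{p}(s) > 0$ for all $s$ and $\sum_s \underline{p}(s) = 1$), it satisfies the divergence constraint $\sum_s \underline{p}(s)^2 / p_0(s) = c$, and $\sum_s \underline{p}(s) u(s) = \mathbb{E}_0[u] - \sqrt{d}\, \mathbb{S}_0[u]$. -/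
/-!
`pmin` is the linear tilt `p₀ (1 + k (E₀ - u))` with `k = √d / S₀`. Any such tilt has total
mass `1`, `χ²`-moment `∑ q² / p₀ = 1 + k² V₀` and mean `E₀ - k V₀`, where `V₀ = S₀²`; for this `k`
these are `c` and `E₀ - √d S₀`. Positivity amounts to `d (E₀ - u(s))² < V₀`: Cauchy–Schwarz
on the complement of `s` gives `p₀(s) (E₀ - u(s))² ≤ (1 - p₀(s)) V₀`, and `c < 1 / (1 - p₀(s))`
says exactly that `d (1 - p₀(s)) < p₀(s)`.
-/

open Finset

namespace ProbabilityMassFunction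

variable {ι : Type*} [Fintype ι] {p : ι → ℝ} (u : ι → ℝ)

lemma sum_mul_expct_sub_eq_zero (hp1 : ∑ s, p s = 1) :
    ∑ s, p s * (expct p u - u s) = 0 := by
  simp only [mul_sub, sum_sub_distrib, ← sum_mul, hp1, one_mul, expct, sub_self]

lemma var0_eq_sum_mul_expct_sub_sq : var0 p u = ∑ s, p s * (expct p u - u s) ^ 2 := by
  unfold var0
  exact sum_congr rfl fun s _ => by ring

lemma var0_pos (hp : ∀ s, 0 < p s) {s t : ι} (hst : u s ≠ u t) : 0 < var0 p u := by
  obtain ⟨r, hr⟩ : ∃ r, u r ≠ expct p u := by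
    by_contra! h
    exact hst ((h s).trans (h t).symm)
  have hr' : u r - expct p u ≠ 0 := sub_ne_zero.mpr hr
  exact sum_pos' (fun i _ => mul_nonneg (hp i).le (sq_nonneg _))
    ⟨r, mem_univ r, mul_pos (hp r) (by positivity)⟩

lemma mul_sq_le_one_sub_mul_var0 (hp : ∀ s, 0 ≤ p s) (hp1 : ∑ s, p s = 1) (s : ι) :
    p s * (expct p u - u s) ^ 2 ≤ (1 - p s) * var0 p u := by
  classical
  set w := fun r => expct p u - u r
  have hrest : ∑ r ∈ univ.erase s, p r * w r = -(p s * w s) := by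
    have := sum_mul_expct_sub_eq_zero u hp1
    rw [← add_sum_erase _ _ (mem_univ s)] at this
    linarith
  have hmass : ∑ r ∈ univ.erase s, p r = 1 - p s := by
    rw [← hp1, ← add_sum_erase _ _ (mem_univ s), add_sub_cancel_left]
  have hvar : ∑ r ∈ univ.erase s, p r * w r ^ 2 = var0 p u - p s * w s ^ 2 := by
    rw [var0_eq_sum_mul_expct_sub_sq, ← add_sum_erase _ _ (mem_univ s), add_sub_cancel_left]
  have hcs := sum_sq_le_sum_mul_sum_of_sq_le_mul (univ.erase s) (r := fun r => p r * w r)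
    (fun r _ => hp r) (fun r _ => mul_nonneg (hp r) (sq_nonneg (w r))) (fun r _ => le_of_eq (by ring))
  rw [hrest, hmass, hvar] at hcs
  linear_combination hcs

lemma sub_one_mul_sq_lt_var0 (hp : ∀ s, 0 < p s) (hp1 : ∑ s, p s = 1) (hV : 0 < var0 p u)
    {c : ℝ} (hc1 : 1 ≤ c) {s : ι} (hc : c < 1 / (1 - p s)) :
    (c - 1) * (expct p u - u s) ^ 2 < var0 p u := by
  have hq : 0 < 1 - p s := one_div_pos.mp (by linarith)
  have hcq : (c - 1) * (1 - p s) < p s := by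
    have := (lt_div_iff₀ hq).mp hc
    linarith
  have hdev := mul_sq_le_one_sub_mul_var0 u (fun r => (hp r).le) hp1 s
  refine lt_of_mul_lt_mul_left ?_ (hp s).le
  calc p s * ((c - 1) * (expct p u - u s) ^ 2)
      = (c - 1) * (p s * (expct p u - u s) ^ 2) := by ring
    _ ≤ (c - 1) * ((1 - p s) * var0 p u) := mul_le_mul_of_nonneg_left hdev (by linarith)
    _ = (c - 1) * (1 - p s) * var0 p u := by ring
    _ < p s * var0 p u := mul_lt_mul_of_pos_right hcq hV

variable (p) in
noncomputable def linearTilt (k : ℝ) (s : ι) : ℝ := p s * (1 + k * (expct p u - u s))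

lemma sum_linearTilt (hp1 : ∑ s, p s = 1) (k : ℝ) : ∑ s, linearTilt p u k s = 1 := by
  unfold linearTilt
  have := sum_mul_expct_sub_eq_zero u hp1
  simp only [mul_add, mul_one, sum_add_distrib, hp1, mul_left_comm (p _) k, ← mul_sum, this,
    mul_zero, add_zero]

lemma sum_linearTilt_sq_div (hp : ∀ s, p s ≠ 0) (hp1 : ∑ s, p s = 1) (k : ℝ) :
    ∑ s, linearTilt p u k s ^ 2 / p s = 1 + k ^ 2 * var0 p u := by
  unfold linearTilt
  have hexp : ∀ s, (p s * (1 + k * (expct p u - u s))) ^ 2 / p s =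
      p s + 2 * k * (p s * (expct p u - u s)) + k ^ 2 * (p s * (expct p u - u s) ^ 2) := by
    intro s
    field_simp [hp s]
    ring
  simp only [hexp, sum_add_distrib, ← mul_sum, hp1, sum_mul_expct_sub_eq_zero u hp1,
    ← var0_eq_sum_mul_expct_sub_sq, mul_zero, add_zero]

lemma sum_linearTilt_mul (hp1 : ∑ s, p s = 1) (k : ℝ) :
    ∑ s, linearTilt p u k s * u s = expct p u - k * var0 p u := by
  unfold linearTilt
  have hexp : ∀ s, p s * (1 + k * (expct p u - u s)) * u s =
      p s * u s + k * expct p u * (p s * (expct p u - u s)) -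
        k * (p s * (expct p u - u s) ^ 2) := fun s => by ring
  rw [Fintype.sum_congr _ _ hexp]
  simp only [sum_sub_distrib, sum_add_distrib, ← mul_sum, sum_mul_expct_sub_eq_zero u hp1,
    ← var0_eq_sum_mul_expct_sub_sq, mul_zero, add_zero]
  rfl

lemma linearTilt_pos (hp : ∀ s, 0 < p s) (hp1 : ∑ s, p s = 1) (hV : 0 < var0 p u) {c k : ℝ}
    (hc1 : 1 ≤ c) (hk : k ^ 2 * var0 p u = c - 1) {s : ι} (hc : c < 1 / (1 - p s)) :
    0 < linearTilt p u k s := by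
  have hsmall : (k * (expct p u - u s)) ^ 2 < 1 := by
    refine lt_of_mul_lt_mul_right ?_ hV.le
    calc (k * (expct p u - u s)) ^ 2 * var0 p u
        = (c - 1) * (expct p u - u s) ^ 2 := by rw [← hk]; ring
      _ < var0 p u := sub_one_mul_sq_lt_var0 u hp hp1 hV hc1 hc
      _ = 1 * var0 p u := (one_mul _).symm
  have := neg_lt_of_abs_lt ((sq_lt_one_iff_abs_lt_one _).mp hsmall)
  exact mul_pos (hp s) (by linarith)

end ProbabilityMassFunction

open ProbabilityMassFunction in
theorem stmt_4_general {D : Type*} [Fintype D]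
    (p0 : D → ℝ) (hpos : ∀ s, 0 < p0 s) (hsum : ∑ s, p0 s = 1)
    (c : ℝ) (hc1 : 1 < c) (hc : ∀ s, c < 1 / (1 - p0 s))
    (d : ℝ) (hd : d = c - 1)
    (u : D → ℝ) (hu : ∃ s t, u s ≠ u t)
    (pmin : D → ℝ)
    (hpmin : ∀ s, pmin s =
      p0 s * (1 + Real.sqrt d * (expct p0 u - u s) / sdev p0 u)) :
    (∀ s, 0 < pmin s) ∧ (∑ s, pmin s = 1) ∧
      (∑ s, (pmin s) ^ 2 / p0 s = c) ∧
      (∑ s, pmin s * u s = expct p0 u - Real.sqrt d * sdev p0 u) := by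
  obtain ⟨s₀, t₀, hst⟩ := hu
  have hV : 0 < var0 p0 u := var0_pos u hpos hst
  set k := Real.sqrt d / sdev p0 u
  have hk2 : k ^ 2 * var0 p0 u = c - 1 := by
    rw [div_pow, Real.sq_sqrt (by linarith), sdev, Real.sq_sqrt hV.le, div_mul_cancel₀ _ hV.ne', hd]
  have hkV : k * var0 p0 u = Real.sqrt d * sdev p0 u := by
    have hS : sdev p0 u ≠ 0 := (Real.sqrt_pos.mpr hV).ne'
    rw [← Real.sq_sqrt hV.le, ← sdev, sq, ← mul_assoc, div_mul_cancel₀ _ hS]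
  have hpmin' : pmin = linearTilt p0 u k := by
    funext s
    rw [hpmin, mul_div_right_comm, linearTilt]
  subst hpmin'
  refine ⟨fun s => linearTilt_pos u hpos hsum hV hc1.le hk2 (hc s), sum_linearTilt u hsum k, ?_, ?_⟩
  · rw [sum_linearTilt_sq_div u (fun s => (hpos s).ne') hsum, hk2]
    ring
  · rw [sum_linearTilt_mul u hsum, hkV]

theorem stmt_4 {D : Type*} [Fintype D]
    (hD : 2 ≤ Fintype.card D)
    (p0 : D → ℝ) (hpos : ∀ s, 0 < p0 s) (hsum : ∑ s, p0 s = 1)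
    (c : ℝ) (hc1 : 1 < c) (hc : ∀ s, c < 1 / (1 - p0 s))
    (d : ℝ) (hd : d = c - 1)
    (u : D → ℝ) (hu : ∃ s t, u s ≠ u t)
    (pmin : D → ℝ)
    (hpmin : ∀ s, pmin s =
      p0 s * (1 + Real.sqrt d * (expct p0 u - u s) / sdev p0 u)) :
    (∀ s, 0 < pmin s) ∧ (∑ s, pmin s = 1) ∧
      (∑ s, (pmin s) ^ 2 / p0 s = c) ∧
      (∑ s, pmin s * u s = expct p0 u - Real.sqrt d * sdev p0 u) :=
  stmt_4_general p0 hpos hsum c hc1 hc d hd u hu pmin hpmin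
end

section
/- Let $D$ be a finite set with $|D|\geq 2$, $p_0$ a strictly positive probability mass function, $c>1$ with $c < \min_s 1/(1-p_0(s))$, $d = c-1$, and $u : D \to \mathbb{R}$ nonconstant. Define $\overline{p}(s) = p_0(s)\left(1 - \sqrt{d}\,\frac{\mathbb{E}_0[u] - u(s)}{\mathbb{S}_0[u]}\right)$. Then $\overline{p}$ is a probability mass function with $\sum_s \overline{p}(s)^2/p_0(s) = c$ and $\sum_s \overline{p}(s) u(s) = \mathbb{E}_0[u] + \sqrt{d}\, \mathbb{S}_0[u]$. -/
open Finset

section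

variable {D : Type*} [Fintype D] {p : D → ℝ} (u : D → ℝ)

lemma sum_mul_sub_expct (hp : ∑ s, p s = 1) : ∑ s, p s * (u s - expct p u) = 0 := by
  simp only [mul_sub, sum_sub_distrib, ← sum_mul, hp, one_mul, expct, sub_self]

lemma sum_mul_sub_expct_mul (hp : ∑ s, p s = 1) :
    ∑ s, p s * (u s - expct p u) * u s = var0 p u := by
  have hsplit : ∀ s, p s * (u s - expct p u) * u s
      = p s * (u s - expct p u) ^ 2 + expct p u * (p s * (u s - expct p u)) := fun s => by ring
  rw [sum_congr rfl fun s _ => hsplit s, sum_add_distrib, ← mul_sum, sum_mul_sub_expct u hp,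
    mul_zero, add_zero, var0]

lemma var0_pos (hp : ∀ s, 0 < p s) (hu : ∃ s t, u s ≠ u t) : 0 < var0 p u := by
  obtain ⟨s, t, hst⟩ := hu
  obtain ⟨r, hr⟩ : ∃ r, u r ≠ expct p u := by
    by_contra! h
    exact hst ((h s).trans (h t).symm)
  refine sum_pos' (fun i _ => mul_nonneg (hp i).le (sq_nonneg _)) ⟨r, mem_univ r, ?_⟩
  have := sub_ne_zero.2 hr
  have := hp r
  positivity

/-- Cauchy–Schwarz over the states other than `s`, whose deviations add up to `-p s (u s - E u)`. -/
lemma mul_sq_sub_expct_le (hp : ∀ s, 0 ≤ p s) (hsum : ∑ s, p s = 1) (s : D) :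
    p s * (u s - expct p u) ^ 2 ≤ (1 - p s) * var0 p u := by
  classical
  set a := u s - expct p u
  have hrest : ∀ f : D → ℝ, ∑ t ∈ univ.erase s, f t = ∑ t, f t - f s :=
    fun f => sum_erase_eq_sub (mem_univ s)
  have hcs := sum_sq_le_sum_mul_sum_of_sq_le_mul (univ.erase s)
    (r := fun t => p t * (u t - expct p u)) (f := p)
    (g := fun t => p t * (u t - expct p u) ^ 2)
    (fun t _ => hp t) (fun t _ => mul_nonneg (hp t) (sq_nonneg _)) (fun t _ => le_of_eq (by ring))
  rw [hrest, hrest, hrest, sum_mul_sub_expct u hsum, hsum, ← var0] at hcs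
  nlinarith [hp s, sq_nonneg a]

lemma sqrt_mul_expct_sub_lt_sdev (hp : ∀ s, 0 < p s) (hsum : ∑ s, p s = 1)
    (hu : ∃ s t, u s ≠ u t) {d : ℝ} (hd : 0 ≤ d) {s : D} (hds : d * (1 - p s) < p s) :
    Real.sqrt d * (expct p u - u s) < sdev p u := by
  refine Real.lt_sqrt_of_sq_lt ?_
  have hV := var0_pos u hp hu
  have hcs := mul_sq_sub_expct_le u (fun t => (hp t).le) hsum s
  have hps := hp s
  rw [mul_pow, Real.sq_sqrt hd]
  nlinarith [mul_le_mul_of_nonneg_left hcs hd, sq_nonneg (expct p u - u s),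
    mul_lt_mul_of_pos_right hds hV]

variable (p)

noncomputable def tilt (k : ℝ) (s : D) : ℝ := p s * (1 + k * (u s - expct p u))

variable {p}

lemma sum_tilt (hp : ∑ s, p s = 1) (k : ℝ) : ∑ s, tilt p u k s = 1 := by
  simp only [tilt, mul_add, mul_one, sum_add_distrib, hp, mul_left_comm (p _) k, ← mul_sum,
    sum_mul_sub_expct u hp, mul_zero, add_zero]

lemma sum_tilt_mul (hp : ∑ s, p s = 1) (k : ℝ) :
    ∑ s, tilt p u k s * u s = expct p u + k * var0 p u := by
  have hsplit : ∀ s, tilt p u k s * u s = p s * u s + k * (p s * (u s - expct p u) * u s) :=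
    fun s => by simp only [tilt]; ring
  rw [sum_congr rfl fun s _ => hsplit s, sum_add_distrib, ← mul_sum, sum_mul_sub_expct_mul u hp,
    expct]

lemma sum_sq_tilt_div (hp : ∀ s, p s ≠ 0) (hsum : ∑ s, p s = 1) (k : ℝ) :
    ∑ s, tilt p u k s ^ 2 / p s = 1 + k ^ 2 * var0 p u := by
  have hsplit : ∀ s, tilt p u k s ^ 2 / p s
      = p s + 2 * k * (p s * (u s - expct p u)) + k ^ 2 * (p s * (u s - expct p u) ^ 2) := by
    intro s
    simp only [tilt]
    field_simp [hp s]
    ring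
  rw [sum_congr rfl fun s _ => hsplit s, sum_add_distrib, sum_add_distrib, ← mul_sum, ← mul_sum,
    sum_mul_sub_expct u hsum, hsum, var0]
  ring

end

theorem stmt_5_general {D : Type*} [Fintype D]
    (p0 : D → ℝ) (hpos : ∀ s, 0 < p0 s) (hsum : ∑ s, p0 s = 1)
    (c : ℝ) (hc1 : 1 < c) (hc : ∀ s, c < 1 / (1 - p0 s))
    (d : ℝ) (hd : d = c - 1)
    (u : D → ℝ) (hu : ∃ s t, u s ≠ u t)
    (pmax : D → ℝ)
    (hpmax : ∀ s, pmax s =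
      p0 s * (1 - Real.sqrt d * (expct p0 u - u s) / sdev p0 u)) :
    (∀ s, 0 < pmax s) ∧ (∑ s, pmax s = 1) ∧
      (∑ s, (pmax s) ^ 2 / p0 s = c) ∧
      (∑ s, pmax s * u s = expct p0 u + Real.sqrt d * sdev p0 u) := by
  have hd0 : 0 ≤ d := by linarith
  have hV := var0_pos u hpos hu
  have hσ : 0 < sdev p0 u := Real.sqrt_pos.2 hV
  have hσsq : sdev p0 u ^ 2 = var0 p0 u := Real.sq_sqrt hV.le
  have hds : ∀ s, d * (1 - p0 s) < p0 s := fun s => by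
    have h1 : 0 < 1 - p0 s := by
      by_contra! h
      linarith [hc s, div_nonpos_of_nonneg_of_nonpos zero_le_one h]
    nlinarith [(lt_div_iff₀ h1).1 (hc s)]
  obtain rfl : pmax = tilt p0 u (Real.sqrt d / sdev p0 u) :=
    funext fun s => by rw [hpmax, tilt]; ring
  refine ⟨fun s => ?_, sum_tilt u hsum _, ?_, ?_⟩
  · rw [hpmax]
    have hlt := (div_lt_one hσ).2 (sqrt_mul_expct_sub_lt_sdev u hpos hsum hu hd0 (hds s))
    exact mul_pos (hpos s) (by linarith)
  · rw [sum_sq_tilt_div u (fun s => (hpos s).ne') hsum, div_pow, Real.sq_sqrt hd0, hσsq,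
      div_mul_cancel₀ _ hV.ne', hd]
    ring
  · rw [sum_tilt_mul u hsum, ← hσsq]
    field_simp

theorem stmt_5 {D : Type*} [Fintype D]
    (hD : 2 ≤ Fintype.card D)
    (p0 : D → ℝ) (hpos : ∀ s, 0 < p0 s) (hsum : ∑ s, p0 s = 1)
    (c : ℝ) (hc1 : 1 < c) (hc : ∀ s, c < 1 / (1 - p0 s))
    (d : ℝ) (hd : d = c - 1)
    (u : D → ℝ) (hu : ∃ s t, u s ≠ u t)
    (pmax : D → ℝ)
    (hpmax : ∀ s, pmax s =
      p0 s * (1 - Real.sqrt d * (expct p0 u - u s) / sdev p0 u)) :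
    (∀ s, 0 < pmax s) ∧ (∑ s, pmax s = 1) ∧
      (∑ s, (pmax s) ^ 2 / p0 s = c) ∧
      (∑ s, pmax s * u s = expct p0 u + Real.sqrt d * sdev p0 u) :=
  stmt_5_general p0 hpos hsum c hc1 hc d hd u hu pmax hpmax
end

section
/- Let $D$ be a finite set with $|D|\geq 2$, $p_0$ a strictly positive probability mass function, $c>1$ with $c < \min_s 1/(1-p_0(s))$, and $u : D \to \mathbb{R}$ nonconstant. Let $\mathcal{X} = \{P : D \to \mathbb{R}_{\geq 0} \mid \sum_s P(s) = 1, \sum_s P(s)^2/p_0(s) \leq c\}$. Then $\min_{P \in \mathcal{X}} \mathbb{E}_P[u] = \mathbb{E}_0[u] - \sqrt{c-1}\,\mathbb{S}_0[u]$ and $\max_{P \in \mathcal{X}} \mathbb{E}_P[u] = \mathbb{E}_0[u] + \sqrt{c-1}\,\mathbb{S}_0[u]$. -/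
/-- The quadratic-divergence ambiguity set around `p0` with radius `c`. -/
def ambSet {D : Type*} [Fintype D] (p0 : D → ℝ) (c : ℝ) : Set (D → ℝ) :=
  {P | (∀ s, 0 ≤ P s) ∧ (∑ s, P s = 1) ∧ (∑ s, (P s) ^ 2 / p0 s ≤ c)}

lemma centered_sum_zero {D : Type*} [Fintype D] (p0 u : D → ℝ) (hsum : ∑ s, p0 s = 1) :
    ∑ s, p0 s * (u s - expct p0 u) = 0 := by
  simp only [mul_sub, Finset.sum_sub_distrib, ← Finset.sum_mul, hsum, expct]
  ring

lemma var0_nonneg {D : Type*} [Fintype D] (p0 u : D → ℝ) (hpos : ∀ s, 0 < p0 s) :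
    0 ≤ var0 p0 u :=
  Finset.sum_nonneg fun s _ => mul_nonneg (hpos s).le (sq_nonneg _)

lemma var0_pos_s6 {D : Type*} [Fintype D] (p0 u : D → ℝ) (hpos : ∀ s, 0 < p0 s)
    (hu : ∃ s t, u s ≠ u t) : 0 < var0 p0 u := by
  obtain ⟨s, t, hst⟩ := hu
  have h : u s - expct p0 u ≠ 0 ∨ u t - expct p0 u ≠ 0 := by
    by_contra h
    push_neg at h
    apply hst
    have h1 := h.1; have h2 := h.2
    linarith
  obtain h | h := h
  · calc (0:ℝ) < p0 s * (u s - expct p0 u) ^ 2 :=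
        mul_pos (hpos s) (sq_pos_of_ne_zero h)
    _ ≤ var0 p0 u := Finset.single_le_sum
        (f := fun i => p0 i * (u i - expct p0 u) ^ 2)
        (fun i _ => mul_nonneg (hpos i).le (sq_nonneg _)) (Finset.mem_univ s)
  · calc (0:ℝ) < p0 t * (u t - expct p0 u) ^ 2 :=
        mul_pos (hpos t) (sq_pos_of_ne_zero h)
    _ ≤ var0 p0 u := Finset.single_le_sum
        (f := fun i => p0 i * (u i - expct p0 u) ^ 2)
        (fun i _ => mul_nonneg (hpos i).le (sq_nonneg _)) (Finset.mem_univ t)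

/-- Cauchy–Schwarz upper bound for any member of the ambiguity set. -/
lemma aux_cs {D : Type*} [Fintype D] (p0 : D → ℝ) (hpos : ∀ s, 0 < p0 s)
    (hsum : ∑ s, p0 s = 1) (c : ℝ) (hc1 : 1 < c) (u : D → ℝ) (P : D → ℝ)
    (hP : P ∈ ambSet p0 c) :
    |expct P u - expct p0 u| ≤ Real.sqrt (c - 1) * sdev p0 u := by
  obtain ⟨hP0, hP1, hP2⟩ := hP
  set μ := expct p0 u with hμ
  have hV : 0 ≤ var0 p0 u := var0_nonneg p0 u hpos
  have hE : expct P u - μ = ∑ s, (P s - p0 s) * (u s - μ) := by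
    simp only [sub_mul, mul_sub, Finset.sum_sub_distrib, ← Finset.sum_mul, hsum, hP1, expct, hμ]
    ring
  have hcs := Finset.sum_mul_sq_le_sq_mul_sq Finset.univ
      (fun s => (P s - p0 s) / Real.sqrt (p0 s)) (fun s => Real.sqrt (p0 s) * (u s - μ))
  have h1 : ∀ s, (P s - p0 s) / Real.sqrt (p0 s) * (Real.sqrt (p0 s) * (u s - μ))
      = (P s - p0 s) * (u s - μ) := by
    intro s
    have hs : Real.sqrt (p0 s) ≠ 0 := (Real.sqrt_pos.mpr (hpos s)).ne'
    field_simp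
  have h2 : ∀ s, ((P s - p0 s) / Real.sqrt (p0 s)) ^ 2 = (P s - p0 s) ^ 2 / p0 s := by
    intro s
    rw [div_pow, Real.sq_sqrt (hpos s).le]
  have h3 : ∀ s, (Real.sqrt (p0 s) * (u s - μ)) ^ 2 = p0 s * (u s - μ) ^ 2 := by
    intro s
    rw [mul_pow, Real.sq_sqrt (hpos s).le]
  rw [Finset.sum_congr rfl fun s _ => h1 s, Finset.sum_congr rfl fun s _ => h2 s,
    Finset.sum_congr rfl fun s _ => h3 s] at hcs
  have h4 : ∑ s, (P s - p0 s) ^ 2 / p0 s ≤ c - 1 := by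
    have h5 : ∀ s, (P s - p0 s) ^ 2 / p0 s = P s ^ 2 / p0 s - 2 * P s + p0 s := by
      intro s
      have := (hpos s).ne'
      field_simp
      ring
    rw [Finset.sum_congr rfl fun s _ => h5 s]
    rw [Finset.sum_add_distrib, Finset.sum_sub_distrib, ← Finset.mul_sum, hsum, hP1]
    linarith
  have hb : (expct P u - μ) ^ 2 ≤ (Real.sqrt (c - 1) * sdev p0 u) ^ 2 := by
    rw [mul_pow, Real.sq_sqrt (by linarith : (0:ℝ) ≤ c - 1), sdev, Real.sq_sqrt hV, hE]
    calc (∑ s, (P s - p0 s) * (u s - μ)) ^ 2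
        ≤ (∑ s, (P s - p0 s) ^ 2 / p0 s) * ∑ s, p0 s * (u s - μ) ^ 2 := hcs
      _ ≤ (c - 1) * var0 p0 u := by
          apply mul_le_mul_of_nonneg_right h4
          exact hV
  have hnn : 0 ≤ Real.sqrt (c - 1) * sdev p0 u := by
    apply mul_nonneg (Real.sqrt_nonneg _) (Real.sqrt_nonneg _)
  calc |expct P u - μ| = Real.sqrt ((expct P u - μ) ^ 2) := (Real.sqrt_sq_eq_abs _).symm
    _ ≤ Real.sqrt ((Real.sqrt (c - 1) * sdev p0 u) ^ 2) := Real.sqrt_le_sqrt hb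
    _ = Real.sqrt (c - 1) * sdev p0 u := Real.sqrt_sq hnn

/-- The extremal tilted distribution lies in the ambiguity set and attains mean `μ + l·V`. -/
lemma aux_mem {D : Type*} [Fintype D] (hD : 2 ≤ Fintype.card D)
    (p0 : D → ℝ) (hpos : ∀ s, 0 < p0 s) (hsum : ∑ s, p0 s = 1)
    (c : ℝ) (hc1 : 1 < c) (hc : ∀ s, c < 1 / (1 - p0 s))
    (u : D → ℝ) (hu : ∃ s t, u s ≠ u t) (l : ℝ)
    (hl : l ^ 2 * var0 p0 u = c - 1) :
    (fun s => p0 s * (1 + l * (u s - expct p0 u))) ∈ ambSet p0 c ∧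
      expct (fun s => p0 s * (1 + l * (u s - expct p0 u))) u
        = expct p0 u + l * var0 p0 u := by
  classical
  set μ := expct p0 u with hμ
  have hd0 : ∑ s, p0 s * (u s - μ) = 0 := centered_sum_zero p0 u hsum
  have hVpos : 0 < var0 p0 u := var0_pos_s6 p0 u hpos hu
  have hVdef : var0 p0 u = ∑ s, p0 s * (u s - μ) ^ 2 := rfl
  -- every p0 s < 1
  have hlt1 : ∀ s, p0 s < 1 := by
    intro s
    have : Nontrivial D := Fintype.one_lt_card_iff_nontrivial.mp (by omega)
    obtain ⟨t, hts⟩ := exists_ne s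
    have hsub : ({s, t} : Finset D) ⊆ Finset.univ := Finset.subset_univ _
    have hpair : ∑ x ∈ ({s, t} : Finset D), p0 x = p0 s + p0 t :=
      Finset.sum_pair (Ne.symm hts)
    have hle : ∑ x ∈ ({s, t} : Finset D), p0 x ≤ ∑ x, p0 x :=
      Finset.sum_le_sum_of_subset_of_nonneg hsub fun i _ _ => (hpos i).le
    rw [hpair, hsum] at hle
    linarith [hpos t]
  -- key variance bound: p0 s * d s ^ 2 ≤ (1 - p0 s) * V
  have hkey : ∀ s, p0 s * (u s - μ) ^ 2 ≤ (1 - p0 s) * var0 p0 u := by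
    intro s
    have hs0 : ∑ t ∈ Finset.univ.erase s, p0 t * (u t - μ) = -(p0 s * (u s - μ)) := by
      have h := hd0
      rw [← Finset.add_sum_erase _ _ (Finset.mem_univ s)] at h
      linarith
    have hs1 : ∑ t ∈ Finset.univ.erase s, p0 t = 1 - p0 s := by
      have h := hsum
      rw [← Finset.add_sum_erase _ _ (Finset.mem_univ s)] at h
      linarith
    have hs2 : ∑ t ∈ Finset.univ.erase s, p0 t * (u t - μ) ^ 2
        = var0 p0 u - p0 s * (u s - μ) ^ 2 := by
      have h := hVdef
      rw [← Finset.add_sum_erase _ _ (Finset.mem_univ s)] at h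
      linarith
    have hcs := Finset.sum_mul_sq_le_sq_mul_sq (Finset.univ.erase s)
        (fun t => Real.sqrt (p0 t)) (fun t => Real.sqrt (p0 t) * (u t - μ))
    have e1 : ∀ t, Real.sqrt (p0 t) * (Real.sqrt (p0 t) * (u t - μ)) = p0 t * (u t - μ) := by
      intro t
      rw [← mul_assoc, Real.mul_self_sqrt (hpos t).le]
    have e2 : ∀ t, (Real.sqrt (p0 t)) ^ 2 = p0 t := fun t => Real.sq_sqrt (hpos t).le
    have e3 : ∀ t, (Real.sqrt (p0 t) * (u t - μ)) ^ 2 = p0 t * (u t - μ) ^ 2 := by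
      intro t
      rw [mul_pow, Real.sq_sqrt (hpos t).le]
    rw [Finset.sum_congr rfl fun t _ => e1 t, Finset.sum_congr rfl fun t _ => e2 t,
      Finset.sum_congr rfl fun t _ => e3 t, hs0, hs1, hs2] at hcs
    nlinarith [hpos s, sq_nonneg (u s - μ)]
  -- consequently (c-1) d² ≤ V
  have hdV : ∀ s, (c - 1) * (u s - μ) ^ 2 ≤ var0 p0 u := by
    intro s
    have h1 : 0 < 1 - p0 s := by linarith [hlt1 s]
    have h3 : c * (1 - p0 s) < 1 := (lt_div_iff₀ h1).mp (hc s)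
    nlinarith [hkey s, sq_nonneg (u s - μ), hpos s, hVpos]
  -- nonnegativity of the tilt
  have hnn : ∀ s, 0 ≤ 1 + l * (u s - μ) := by
    intro s
    have h1 : (l * (u s - μ)) ^ 2 ≤ 1 := by
      have h2 := hdV s
      rw [← hl] at h2
      have : var0 p0 u * ((l * (u s - μ)) ^ 2 - 1) ≤ 0 := by nlinarith
      nlinarith
    nlinarith [sq_nonneg (1 + l * (u s - μ))]
  refine ⟨⟨fun s => mul_nonneg (hpos s).le (hnn s), ?_, ?_⟩, ?_⟩
  · have e : ∀ s, p0 s * (1 + l * (u s - μ)) = p0 s + l * (p0 s * (u s - μ)) := by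
      intro s; ring
    rw [Finset.sum_congr rfl fun s _ => e s, Finset.sum_add_distrib, ← Finset.mul_sum,
      hd0, hsum]
    ring
  · have e : ∀ s, (p0 s * (1 + l * (u s - μ))) ^ 2 / p0 s
        = p0 s + (2 * l) * (p0 s * (u s - μ)) + l ^ 2 * (p0 s * (u s - μ) ^ 2) := by
      intro s
      have := (hpos s).ne'
      field_simp
      ring
    rw [Finset.sum_congr rfl fun s _ => e s, Finset.sum_add_distrib, Finset.sum_add_distrib,
      ← Finset.mul_sum, ← Finset.mul_sum, hd0, hsum, ← hVdef, hl]
    ring_nf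
    linarith
  · have e : ∀ s, p0 s * (1 + l * (u s - μ)) * u s
        = p0 s * u s + l * (p0 s * (u s - μ) ^ 2) + (l * μ) * (p0 s * (u s - μ)) := by
      intro s; ring
    show ∑ s, p0 s * (1 + l * (u s - μ)) * u s = μ + l * var0 p0 u
    rw [Finset.sum_congr rfl fun s _ => e s, Finset.sum_add_distrib, Finset.sum_add_distrib,
      ← Finset.mul_sum, ← Finset.mul_sum, hd0, ← hVdef]
    show expct p0 u + l * var0 p0 u + l * μ * 0 = μ + l * var0 p0 u
    rw [← hμ]
    ring

theorem stmt_6 {D : Type*} [Fintype D]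
    (hD : 2 ≤ Fintype.card D)
    (p0 : D → ℝ) (hpos : ∀ s, 0 < p0 s) (hsum : ∑ s, p0 s = 1)
    (c : ℝ) (hc1 : 1 < c) (hc : ∀ s, c < 1 / (1 - p0 s))
    (u : D → ℝ) (hu : ∃ s t, u s ≠ u t) :
    IsLeast ((fun P => expct P u) '' ambSet p0 c)
        (expct p0 u - Real.sqrt (c - 1) * sdev p0 u) ∧
      IsGreatest ((fun P => expct P u) '' ambSet p0 c)
        (expct p0 u + Real.sqrt (c - 1) * sdev p0 u) := by
  have hVpos : 0 < var0 p0 u := var0_pos_s6 p0 u hpos hu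
  have hσpos : 0 < sdev p0 u := Real.sqrt_pos.mpr hVpos
  have hσsq : sdev p0 u ^ 2 = var0 p0 u := Real.sq_sqrt hVpos.le
  set l : ℝ := Real.sqrt (c - 1) / sdev p0 u with hldef
  have hcs : Real.sqrt (c - 1) ^ 2 = c - 1 := Real.sq_sqrt (by linarith)
  have hl : l ^ 2 * var0 p0 u = c - 1 := by
    rw [hldef, div_pow, hσsq, hcs, div_mul_cancel₀ _ hVpos.ne']
  have hlneg : (-l) ^ 2 * var0 p0 u = c - 1 := by rw [neg_pow]; simpa using hl
  have hlV : l * var0 p0 u = Real.sqrt (c - 1) * sdev p0 u := by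
    rw [hldef, ← hσsq]
    field_simp
  constructor
  · constructor
    · obtain ⟨hmem, hval⟩ := aux_mem hD p0 hpos hsum c hc1 hc u hu (-l) hlneg
      refine ⟨_, hmem, ?_⟩
      show expct (fun s => p0 s * (1 + -l * (u s - expct p0 u))) u = _
      rw [hval]
      rw [show (-l) * var0 p0 u = -(l * var0 p0 u) by ring, hlV]
      ring
    · rintro x ⟨P, hP, rfl⟩
      have h := aux_cs p0 hpos hsum c hc1 u P hP
      rw [abs_le] at h
      simp only
      linarith [h.1]
  · constructor
    · obtain ⟨hmem, hval⟩ := aux_mem hD p0 hpos hsum c hc1 hc u hu l hl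
      refine ⟨_, hmem, ?_⟩
      show expct (fun s => p0 s * (1 + l * (u s - expct p0 u))) u = _
      rw [hval, hlV]
    · rintro x ⟨P, hP, rfl⟩
      have h := aux_cs p0 hpos hsum c hc1 u P hP
      rw [abs_le] at h
      simp only
      linarith [h.2]
end

section
/- Under the setting of the previous statement (finite $D$, strictly positive $p_0$, $c>1$ with $c<\min_s 1/(1-p_0(s))$, $u$ nonconstant, ambiguity set $\mathcal{X}$), for any $\alpha \in [0,1]$ it holds that $\alpha \min_{P\in\mathcal{X}} \mathbb{E}_P[u] + (1-\alpha)\max_{P\in\mathcal{X}} \mathbb{E}_P[u] = \mathbb{E}_0[u] - \sqrt{c-1}(2\alpha - 1)\,\mathbb{S}_0[u]$. -/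
theorem stmt_7 {D : Type*} [Fintype D]
    (hD : 2 ≤ Fintype.card D)
    (p0 : D → ℝ) (hpos : ∀ s, 0 < p0 s) (hsum : ∑ s, p0 s = 1)
    (c : ℝ) (hc1 : 1 < c) (hc : ∀ s, c < 1 / (1 - p0 s))
    (u : D → ℝ) (hu : ∃ s t, u s ≠ u t)
    (α : ℝ) (hα0 : 0 ≤ α) (hα1 : α ≤ 1) :
    α * sInf ((fun P => expct P u) '' ambSet p0 c)
        + (1 - α) * sSup ((fun P => expct P u) '' ambSet p0 c)
      = expct p0 u - Real.sqrt (c - 1) * (2 * α - 1) * sdev p0 u := by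
  classical
  set μ := expct p0 u with hμdef
  set d : D → ℝ := fun s => u s - μ with hddef
  set v := var0 p0 u with hvdef
  have hvsum : v = ∑ s, p0 s * d s ^ 2 := rfl
  have hc1' : (0:ℝ) ≤ c - 1 := by linarith
  -- p0 s < 1
  have hplt : ∀ s, p0 s < 1 := by
    intro s
    by_contra h
    push_neg at h
    have h1 : 1 - p0 s ≤ 0 := by linarith
    have h2 : 1 / (1 - p0 s) ≤ 0 := one_div_nonpos.mpr h1
    linarith [hc s]
  have hcs : ∀ s, c * (1 - p0 s) < 1 := by
    intro s
    have h1 : 0 < 1 - p0 s := by linarith [hplt s]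
    have h2 := hc s
    rwa [lt_div_iff₀ h1] at h2
  have hsumd : ∑ s, p0 s * d s = 0 := by
    have : ∀ s ∈ Finset.univ, p0 s * d s = p0 s * u s - μ * p0 s := by
      intro s _; simp only [hddef]; ring
    rw [Finset.sum_congr rfl this, Finset.sum_sub_distrib, ← Finset.mul_sum, hsum]
    simp [hμdef, expct]
  have hsumdu : ∑ s, p0 s * (d s * u s) = v := by
    have : ∀ s ∈ Finset.univ, p0 s * (d s * u s) = p0 s * d s ^ 2 + μ * (p0 s * d s) := by
      intro s _; simp only [hddef]; ring
    rw [Finset.sum_congr rfl this, Finset.sum_add_distrib, ← Finset.mul_sum, hsumd, ← hvsum]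
    ring
  have hvpos : 0 < v := by
    obtain ⟨s, t, hst⟩ := hu
    have hds : d s ≠ 0 ∨ d t ≠ 0 := by
      by_contra h
      push_neg at h
      apply hst
      have h1 : u s = μ := by have := h.1; simp only [hddef] at this; linarith
      have h2 : u t = μ := by have := h.2; simp only [hddef] at this; linarith
      rw [h1, h2]
    have hterm : ∀ r : D, 0 ≤ p0 r * d r ^ 2 := fun r =>
      mul_nonneg (hpos r).le (sq_nonneg _)
    rcases hds with h | h
    · calc (0:ℝ) < p0 s * d s ^ 2 := mul_pos (hpos s) (by positivity)
        _ ≤ v := hvsum ▸ Finset.single_le_sum (fun r _ => hterm r) (Finset.mem_univ s)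
    · calc (0:ℝ) < p0 t * d t ^ 2 := mul_pos (hpos t) (by positivity)
        _ ≤ v := hvsum ▸ Finset.single_le_sum (fun r _ => hterm r) (Finset.mem_univ t)
  -- per-state deviation bound
  have hdev : ∀ s, p0 s * d s ^ 2 ≤ (1 - p0 s) * v := by
    intro s
    have hCS := Finset.sum_mul_sq_le_sq_mul_sq (Finset.univ.erase s)
      (fun t => Real.sqrt (p0 t)) (fun t => Real.sqrt (p0 t) * d t)
    have e1 : ∀ t ∈ Finset.univ.erase s,
        Real.sqrt (p0 t) * (Real.sqrt (p0 t) * d t) = p0 t * d t := by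
      intro t _
      rw [← mul_assoc, Real.mul_self_sqrt (hpos t).le]
    have e2 : ∀ t ∈ Finset.univ.erase s, Real.sqrt (p0 t) ^ 2 = p0 t := by
      intro t _; exact Real.sq_sqrt (hpos t).le
    have e3 : ∀ t ∈ Finset.univ.erase s,
        (Real.sqrt (p0 t) * d t) ^ 2 = p0 t * d t ^ 2 := by
      intro t _; rw [mul_pow, Real.sq_sqrt (hpos t).le]
    rw [Finset.sum_congr rfl e1, Finset.sum_congr rfl e2, Finset.sum_congr rfl e3] at hCS
    have h1 : ∑ t ∈ Finset.univ.erase s, p0 t * d t = -(p0 s * d s) := by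
      rw [Finset.sum_erase_eq_sub (Finset.mem_univ s), hsumd]; ring
    have h2 : ∑ t ∈ Finset.univ.erase s, p0 t = 1 - p0 s := by
      rw [Finset.sum_erase_eq_sub (Finset.mem_univ s), hsum]
    have h3 : ∑ t ∈ Finset.univ.erase s, p0 t * d t ^ 2 = v - p0 s * d s ^ 2 := by
      rw [Finset.sum_erase_eq_sub (Finset.mem_univ s), ← hvsum]
    rw [h1, h2, h3] at hCS
    nlinarith [hpos s, sq_nonneg (d s)]
  set t0 := Real.sqrt ((c - 1) / v) with ht0def
  have ht0sq : t0 ^ 2 = (c - 1) / v := Real.sq_sqrt (div_nonneg hc1' hvpos.le)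
  have ht0nonneg : 0 ≤ t0 := Real.sqrt_nonneg _
  have ht0v : t0 * v = Real.sqrt (c - 1) * Real.sqrt v := by
    rw [ht0def, Real.sqrt_div hc1', div_mul_eq_mul_div, mul_div_assoc, Real.div_sqrt]
  have hKsq : (t0 * v) ^ 2 = (c - 1) * v := by
    rw [mul_pow, ht0sq]
    field_simp
  have hKnonneg : 0 ≤ t0 * v := mul_nonneg ht0nonneg hvpos.le
  -- extremal points
  have key : ∀ ε : ℝ, ε ^ 2 = 1 →
      (fun s => p0 s * (1 + ε * t0 * d s)) ∈ ambSet p0 c ∧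
      expct (fun s => p0 s * (1 + ε * t0 * d s)) u = μ + ε * (t0 * v) := by
    intro ε hε
    have hbd : ∀ s, (ε * t0 * d s) ^ 2 ≤ 1 := by
      intro s
      have h1 : (c - 1) * d s ^ 2 ≤ v := by
        nlinarith [hdev s, hcs s, hpos s, hvpos, sq_nonneg (d s), hplt s]
      have : (ε * t0 * d s) ^ 2 = (c - 1) / v * d s ^ 2 := by
        rw [mul_pow, mul_pow, hε, ht0sq]; ring
      rw [this, div_mul_eq_mul_div, div_le_one hvpos]
      exact h1
    refine ⟨⟨?_, ?_, ?_⟩, ?_⟩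
    · intro s
      have := hbd s
      have h2 : 0 ≤ 1 + ε * t0 * d s := by nlinarith
      exact mul_nonneg (hpos s).le h2
    · have e : ∀ s ∈ Finset.univ,
          p0 s * (1 + ε * t0 * d s) = p0 s + (ε * t0) * (p0 s * d s) := by
        intro s _; ring
      rw [Finset.sum_congr rfl e, Finset.sum_add_distrib, ← Finset.mul_sum, hsum, hsumd]
      ring
    · have e : ∀ s ∈ Finset.univ,
          (p0 s * (1 + ε * t0 * d s)) ^ 2 / p0 s
            = p0 s + (2 * ε * t0) * (p0 s * d s) + (ε ^ 2 * t0 ^ 2) * (p0 s * d s ^ 2) := by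
        intro s _
        have hne := (hpos s).ne'
        field_simp
        ring
      rw [Finset.sum_congr rfl e, Finset.sum_add_distrib, Finset.sum_add_distrib,
        ← Finset.mul_sum, ← Finset.mul_sum, hsum, hsumd, ← hvsum, hε, ht0sq]
      rw [mul_zero, add_zero, one_mul, div_mul_cancel₀ _ hvpos.ne']
      linarith
    · have e : ∀ s ∈ Finset.univ,
          (p0 s * (1 + ε * t0 * d s)) * u s
            = p0 s * u s + (ε * t0) * (p0 s * (d s * u s)) := by
        intro s _; ring
      simp only [expct]
      rw [Finset.sum_congr rfl e, Finset.sum_add_distrib, ← Finset.mul_sum, hsumdu]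
      rw [show ∑ s, p0 s * u s = μ from rfl]
      ring
  obtain ⟨hmemP, hEP⟩ := key 1 (by norm_num)
  obtain ⟨hmemM, hEM⟩ := key (-1) (by norm_num)
  -- upper/lower bound over the ambiguity set
  have hbound : ∀ P ∈ ambSet p0 c, (expct P u - μ) ^ 2 ≤ (c - 1) * v := by
    intro P hP
    obtain ⟨hP0, hP1, hP2⟩ := hP
    have hCS := Finset.sum_mul_sq_le_sq_mul_sq (Finset.univ)
      (fun s => (P s - p0 s) / Real.sqrt (p0 s)) (fun s => Real.sqrt (p0 s) * d s)
    have e1 : ∀ s ∈ Finset.univ,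
        (P s - p0 s) / Real.sqrt (p0 s) * (Real.sqrt (p0 s) * d s) = (P s - p0 s) * d s := by
      intro s _
      have hne : Real.sqrt (p0 s) ≠ 0 := (Real.sqrt_pos.mpr (hpos s)).ne'
      field_simp
    have e2 : ∀ s ∈ Finset.univ,
        ((P s - p0 s) / Real.sqrt (p0 s)) ^ 2 = (P s - p0 s) ^ 2 / p0 s := by
      intro s _; rw [div_pow, Real.sq_sqrt (hpos s).le]
    have e3 : ∀ s ∈ Finset.univ,
        (Real.sqrt (p0 s) * d s) ^ 2 = p0 s * d s ^ 2 := by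
      intro s _; rw [mul_pow, Real.sq_sqrt (hpos s).le]
    rw [Finset.sum_congr rfl e1, Finset.sum_congr rfl e2, Finset.sum_congr rfl e3] at hCS
    have hs1 : ∑ s, (P s - p0 s) * d s = expct P u - μ := by
      have e : ∀ s ∈ Finset.univ,
          (P s - p0 s) * d s = P s * u s - p0 s * u s - μ * P s + μ * p0 s := by
        intro s _; simp only [hddef]; ring
      rw [Finset.sum_congr rfl e]
      rw [Finset.sum_add_distrib, Finset.sum_sub_distrib, Finset.sum_sub_distrib,
        ← Finset.mul_sum, ← Finset.mul_sum, hP1, hsum]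
      simp only [expct, hμdef]
      ring
    have hs2 : ∑ s, (P s - p0 s) ^ 2 / p0 s ≤ c - 1 := by
      have e : ∀ s ∈ Finset.univ,
          (P s - p0 s) ^ 2 / p0 s = P s ^ 2 / p0 s - 2 * P s + p0 s := by
        intro s _
        have hne := (hpos s).ne'
        field_simp
        ring
      rw [Finset.sum_congr rfl e, Finset.sum_add_distrib, Finset.sum_sub_distrib,
        ← Finset.mul_sum, hP1, hsum]
      linarith
    rw [hs1, ← hvsum] at hCS
    calc (expct P u - μ) ^ 2 ≤ (∑ s, (P s - p0 s) ^ 2 / p0 s) * v := hCS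
      _ ≤ (c - 1) * v := mul_le_mul_of_nonneg_right hs2 hvpos.le
  have hsup : sSup ((fun P => expct P u) '' ambSet p0 c) = μ + t0 * v := by
    apply IsGreatest.csSup_eq
    constructor
    · exact ⟨_, hmemP, by show expct (fun s => p0 s * (1 + 1 * t0 * d s)) u = μ + t0 * v; rw [hEP]; ring⟩
    · rintro x ⟨P, hP, rfl⟩
      have h := hbound P hP
      nlinarith [hKnonneg, hKsq]
  have hinf : sInf ((fun P => expct P u) '' ambSet p0 c) = μ - t0 * v := by
    apply IsLeast.csInf_eq
    constructor
    · exact ⟨_, hmemM, by show expct (fun s => p0 s * (1 + -1 * t0 * d s)) u = μ - t0 * v; rw [hEM]; ring⟩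
    · rintro x ⟨P, hP, rfl⟩
      have h := hbound P hP
      nlinarith [hKnonneg, hKsq]
  rw [hsup, hinf]
  have hsd : sdev p0 u = Real.sqrt v := rfl
  rw [hsd, ht0v]
  ring
end

section
/- Let $D$ be a finite set, $p_0$ a strictly positive probability mass function, $c > 1$ with $c < \min_s 1/(1-p_0(s))$, and $\delta = \sqrt{c-1}(2\alpha-1)$ for some $\alpha \in [0,1]$. Define $\mathcal{M}(X) = \mathbb{E}_0[X] - \delta \mathbb{S}_0[X]$ on $\mathbb{R}^D$. Then $\mathcal{M}$ is strictly monotone: if $X_2 \geq X_1$ pointwise and $X_2(s) > X_1(s)$ for at least one $s \in D$, then $\mathcal{M}(X_2) > \mathcal{M}(X_1)$. -/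
/-!
Put `Y = X₂ - X₁ ≥ 0`. The standard deviation is the Euclidean norm of `(√p(s) (u(s) - E u))_s`,
hence a seminorm, so with `|δ| ≤ √(c - 1)` we get
`M(X₂) - M(X₁) = E Y - δ (S X₂ - S X₁) ≥ E Y - √(c - 1) S Y`.
The hypothesis on `c` says `c - 1 < c p(s)`; since `p(s) Y(s) ≤ E Y`, termwise
`(c - 1) p Y² ≤ (c p Y)(p Y) ≤ c (E Y)(p Y)`, strictly where `Y > 0`. Summing,
`(c - 1) E[Y²] < c (E Y)²`, i.e. `(c - 1) Var Y < (E Y)²`, which is `√(c - 1) S Y < E Y`.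
-/

section Moments

variable {D : Type*} [Fintype D]

lemma expct_sub (p u v : D → ℝ) : expct p (u - v) = expct p u - expct p v := by
  simp only [expct, Pi.sub_apply, mul_sub, Finset.sum_sub_distrib]

lemma var0_eq_sub_sq (p u : D → ℝ) (hsum : ∑ s, p s = 1) :
    var0 p u = ∑ s, p s * u s ^ 2 - expct p u ^ 2 := by
  have hexpand : ∀ s, p s * (u s - expct p u) ^ 2
      = p s * u s ^ 2 - 2 * expct p u * (p s * u s) + expct p u ^ 2 * p s := fun s => by ring
  rw [var0, Finset.sum_congr rfl fun s _ => hexpand s, Finset.sum_add_distrib,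
    Finset.sum_sub_distrib, ← Finset.mul_sum, ← Finset.mul_sum, hsum]
  simp only [expct]
  ring

noncomputable def centeredVec (p u : D → ℝ) : EuclideanSpace ℝ D :=
  WithLp.toLp 2 fun s => √(p s) * (u s - expct p u)

lemma centeredVec_sub (p u v : D → ℝ) :
    centeredVec p (u - v) = centeredVec p u - centeredVec p v := by
  ext s
  simp only [centeredVec, expct_sub, Pi.sub_apply, PiLp.sub_apply]
  ring

lemma sdev_eq_norm_centeredVec {p : D → ℝ} (hp : ∀ s, 0 ≤ p s) (u : D → ℝ) :
    sdev p u = ‖centeredVec p u‖ := by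
  simp only [sdev, var0, EuclideanSpace.norm_eq, centeredVec, Real.norm_eq_abs, sq_abs, mul_pow,
    Real.sq_sqrt (hp _)]

lemma abs_sdev_sub_sdev_le {p : D → ℝ} (hp : ∀ s, 0 ≤ p s) (u v : D → ℝ) :
    |sdev p u - sdev p v| ≤ sdev p (u - v) := by
  simp only [sdev_eq_norm_centeredVec hp, centeredVec_sub]
  exact abs_norm_sub_norm_le _ _

end Moments

lemma sub_one_lt_mul_of_lt_one_div {c q : ℝ} (hc : 0 < c) (h : c < 1 / (1 - q)) :
    c - 1 < c * q := by
  rcases le_or_gt (1 - q) 0 with hq | hq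
  · exact absurd h (not_lt.2 (hc.le.trans' (one_div_nonpos.2 hq)))
  · linarith [(lt_div_iff₀ hq).1 h]

section KeyInequality

variable {D : Type*} [Fintype D] {p Y : D → ℝ} {c : ℝ}

lemma sub_one_mul_sum_sq_lt (hp : ∀ s, 0 < p s) (hc0 : 0 ≤ c) (hc : ∀ s, c - 1 < c * p s)
    (hY : ∀ s, 0 ≤ Y s) {s₀ : D} (hs₀ : 0 < Y s₀) :
    (c - 1) * ∑ s, p s * Y s ^ 2 < c * expct p Y ^ 2 := by
  have hpY : ∀ s, 0 ≤ p s * Y s := fun s => mul_nonneg (hp s).le (hY s)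
  have hle_expct : ∀ s, p s * Y s ≤ expct p Y := fun s =>
    Finset.single_le_sum (f := fun s => p s * Y s) (fun i _ => hpY i) (Finset.mem_univ s)
  have hmid : ∀ s, c * (p s * Y s) * (p s * Y s) ≤ c * expct p Y * (p s * Y s) := fun s =>
    mul_le_mul_of_nonneg_right (mul_le_mul_of_nonneg_left (hle_expct s) hc0) (hpY s)
  have hterm : ∀ s, (c - 1) * (p s * Y s ^ 2) ≤ c * expct p Y * (p s * Y s) := fun s => by
    have : (c - 1) * Y s ≤ c * p s * Y s := mul_le_mul_of_nonneg_right (hc s).le (hY s)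
    nlinarith [hmid s, hpY s]
  have hterm₀ : (c - 1) * (p s₀ * Y s₀ ^ 2) < c * expct p Y * (p s₀ * Y s₀) := by
    have : (c - 1) * Y s₀ < c * p s₀ * Y s₀ := mul_lt_mul_of_pos_right (hc s₀) hs₀
    nlinarith [hmid s₀, mul_pos (hp s₀) hs₀]
  calc (c - 1) * ∑ s, p s * Y s ^ 2 = ∑ s, (c - 1) * (p s * Y s ^ 2) := Finset.mul_sum _ _ _
    _ < ∑ s, c * expct p Y * (p s * Y s) :=
        Finset.sum_lt_sum (fun s _ => hterm s) ⟨s₀, Finset.mem_univ _, hterm₀⟩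
    _ = c * expct p Y ^ 2 := by rw [← Finset.mul_sum]; simp only [expct]; ring

lemma sqrt_sub_one_mul_sdev_lt_expct (hp : ∀ s, 0 < p s) (hsum : ∑ s, p s = 1) (hc1 : 1 ≤ c)
    (hc : ∀ s, c - 1 < c * p s) (hY : ∀ s, 0 ≤ Y s) {s₀ : D} (hs₀ : 0 < Y s₀) :
    √(c - 1) * sdev p Y < expct p Y := by
  have hexpct : 0 < expct p Y :=
    Finset.sum_pos' (fun s _ => mul_nonneg (hp s).le (hY s))
      ⟨s₀, Finset.mem_univ _, mul_pos (hp s₀) hs₀⟩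
  have hmoment := sub_one_mul_sum_sq_lt hp (by linarith) hc hY hs₀
  rw [sdev, ← Real.sqrt_mul (by linarith), Real.sqrt_lt' hexpct, var0_eq_sub_sq p Y hsum]
  nlinarith

end KeyInequality

theorem stmt_9 {D : Type*} [Fintype D]
    (p0 : D → ℝ) (hpos : ∀ s, 0 < p0 s) (hsum : ∑ s, p0 s = 1)
    (c : ℝ) (hc1 : 1 < c) (hc : ∀ s, c < 1 / (1 - p0 s))
    (α : ℝ) (hα0 : 0 ≤ α) (hα1 : α ≤ 1)
    (δ : ℝ) (hδ : δ = Real.sqrt (c - 1) * (2 * α - 1)) :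
    ∀ X1 X2 : D → ℝ, (∀ s, X1 s ≤ X2 s) → (∃ s, X1 s < X2 s) →
      expct p0 X1 - δ * sdev p0 X1 < expct p0 X2 - δ * sdev p0 X2 := by
  intro X1 X2 hle ⟨s₀, hs₀⟩
  have hgap : √(c - 1) * sdev p0 (X2 - X1) < expct p0 X2 - expct p0 X1 := by
    rw [← expct_sub]
    exact sqrt_sub_one_mul_sdev_lt_expct hpos hsum hc1.le
      (fun s => sub_one_lt_mul_of_lt_one_div (by linarith) (hc s))
      (fun s => sub_nonneg.2 (hle s)) (sub_pos.2 hs₀)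
  have hδ_le : |δ| ≤ √(c - 1) := by
    rw [hδ, abs_mul, abs_of_nonneg (Real.sqrt_nonneg _)]
    exact mul_le_of_le_one_right (Real.sqrt_nonneg _) (abs_le.2 ⟨by linarith, by linarith⟩)
  have hspread : δ * (sdev p0 X2 - sdev p0 X1) ≤ √(c - 1) * sdev p0 (X2 - X1) :=
    calc δ * (sdev p0 X2 - sdev p0 X1) ≤ |δ| * |sdev p0 X2 - sdev p0 X1| :=
          (le_abs_self _).trans (abs_mul _ _).le
      _ ≤ √(c - 1) * sdev p0 (X2 - X1) :=
          mul_le_mul hδ_le (abs_sdev_sub_sdev_le (fun s => (hpos s).le) X2 X1)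
            (abs_nonneg _) (Real.sqrt_nonneg _)
  linarith
end

section
/- Let $D$ be a finite set, $p_0$ a strictly positive probability mass function, $S : D \to \mathbb{R}$ nonconstant, $|\delta| < 1$ such that $c = 1 + \delta^2$ satisfies $c < \min_s 1/(1-p_0(s))$. Define $\underline{\eta} = \mathbb{E}_0[S] - |\delta|\,\mathbb{S}_0[S]$ and $\overline{\eta} = \mathbb{E}_0[S] + |\delta|\,\mathbb{S}_0[S]$. Then $\min_{s\in D} S(s) < \underline{\eta} \leq \overline{\eta} < \max_{s \in D} S(s)$. -/
/-- Cauchy–Schwarz deviation bound: `p s * (S s - E)^2 ≤ (1 - p s) * Var`. -/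
lemma cs_bound {D : Type*} [Fintype D] (p S : D → ℝ) (hp : ∀ s, 0 ≤ p s)
    (hsum : ∑ s, p s = 1) (s : D) :
    p s * (S s - expct p S) ^ 2 ≤ (1 - p s) * var0 p S := by
  classical
  set E := expct p S with hE
  set T : Finset D := Finset.univ.erase s with hT
  have hmem : s ∈ (Finset.univ : Finset D) := Finset.mem_univ s
  have htot : ∑ t, p t * (S t - E) = 0 := by
    have : ∑ t, p t * (S t - E) = (∑ t, p t * S t) - E * ∑ t, p t := by
      rw [Finset.mul_sum, ← Finset.sum_sub_distrib]
      exact Finset.sum_congr rfl fun t _ => by ring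
    rw [this, hsum, hE, expct]; ring
  have h1 : ∑ t ∈ T, p t * (S t - E) = -(p s * (S s - E)) := by
    have h := Finset.add_sum_erase Finset.univ (fun t => p t * (S t - E)) hmem
    rw [htot] at h; linarith
  have h2 : ∑ t ∈ T, p t = 1 - p s := by
    have h := Finset.add_sum_erase Finset.univ p hmem
    rw [hsum] at h; linarith
  have h3 : ∑ t ∈ T, p t * (S t - E) ^ 2 = var0 p S - p s * (S s - E) ^ 2 := by
    have h := Finset.add_sum_erase Finset.univ (fun t => p t * (S t - E) ^ 2) hmem
    rw [show ∑ t, p t * (S t - E) ^ 2 = var0 p S from rfl] at h; linarith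
  have hcs := Finset.sum_mul_sq_le_sq_mul_sq T (fun t => Real.sqrt (p t))
      (fun t => Real.sqrt (p t) * (S t - E))
  have e1 : ∑ t ∈ T, Real.sqrt (p t) * (Real.sqrt (p t) * (S t - E))
      = ∑ t ∈ T, p t * (S t - E) := by
    refine Finset.sum_congr rfl fun t _ => ?_
    rw [← mul_assoc, Real.mul_self_sqrt (hp t)]
  have e2 : ∑ t ∈ T, Real.sqrt (p t) ^ 2 = ∑ t ∈ T, p t :=
    Finset.sum_congr rfl fun t _ => Real.sq_sqrt (hp t)
  have e3 : ∑ t ∈ T, (Real.sqrt (p t) * (S t - E)) ^ 2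
      = ∑ t ∈ T, p t * (S t - E) ^ 2 := by
    refine Finset.sum_congr rfl fun t _ => ?_
    rw [mul_pow, Real.sq_sqrt (hp t)]
  rw [e1, e2, e3, h1, h2, h3] at hcs
  nlinarith [hcs, hp s, sq_nonneg (S s - E)]

theorem stmt_11 {D : Type*} [Fintype D]
    (p0 : D → ℝ) (hpos : ∀ s, 0 < p0 s) (hsum : ∑ s, p0 s = 1)
    (S : D → ℝ) (hS : ∃ s t, S s ≠ S t)
    (δ : ℝ) (hδ : |δ| < 1)
    (c : ℝ) (hcdef : c = 1 + δ ^ 2) (hc : ∀ s, c < 1 / (1 - p0 s)) :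
    (∃ s, S s < expct p0 S - |δ| * sdev p0 S) ∧
      expct p0 S - |δ| * sdev p0 S ≤ expct p0 S + |δ| * sdev p0 S ∧
      (∃ s, expct p0 S + |δ| * sdev p0 S < S s) := by
  obtain ⟨s0, t0, hst⟩ := hS
  haveI : Nonempty D := ⟨s0⟩
  set E := expct p0 S with hE
  set V := var0 p0 S with hV
  have hplt : ∀ s, p0 s < 1 := by
    intro s
    by_contra h
    push_neg at h
    have h1 : 1 - p0 s ≤ 0 := by linarith
    have h2 : (1 : ℝ) / (1 - p0 s) ≤ 0 := div_nonpos_of_nonneg_of_nonpos zero_le_one h1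
    have hc1 : (1 : ℝ) ≤ c := by nlinarith [sq_nonneg δ]
    linarith [hc s]
  have hkey : ∀ s, δ ^ 2 * (1 - p0 s) < p0 s := by
    intro s
    have h1 : 0 < 1 - p0 s := by linarith [hplt s]
    have h2 : c * (1 - p0 s) < 1 := by
      have h3 := hc s
      rw [lt_div_iff₀ h1] at h3
      exact h3
    nlinarith [h2]
  have hVnn : 0 ≤ V := Finset.sum_nonneg fun t _ => mul_nonneg (hpos t).le (sq_nonneg _)
  have hVpos : 0 < V := by
    have hne : S s0 ≠ E ∨ S t0 ≠ E := by
      by_contra h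
      push_neg at h
      exact hst (h.1.trans h.2.symm)
    obtain hx | hx := hne
    · calc (0:ℝ) < p0 s0 * (S s0 - E) ^ 2 :=
          mul_pos (hpos s0) (pow_two_pos_of_ne_zero (sub_ne_zero.mpr hx))
        _ ≤ V := Finset.single_le_sum (f := fun t => p0 t * (S t - E) ^ 2)
            (fun t _ => mul_nonneg (hpos t).le (sq_nonneg _)) (Finset.mem_univ s0)
    · calc (0:ℝ) < p0 t0 * (S t0 - E) ^ 2 :=
          mul_pos (hpos t0) (pow_two_pos_of_ne_zero (sub_ne_zero.mpr hx))
        _ ≤ V := Finset.single_le_sum (f := fun t => p0 t * (S t - E) ^ 2)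
            (fun t _ => mul_nonneg (hpos t).le (sq_nonneg _)) (Finset.mem_univ t0)
  have hσ : sdev p0 S = Real.sqrt V := rfl
  have hσsq : Real.sqrt V ^ 2 = V := Real.sq_sqrt hVnn
  have hσpos : 0 < Real.sqrt V := Real.sqrt_pos.mpr hVpos
  have hδσnn : 0 ≤ |δ| * Real.sqrt V := mul_nonneg (abs_nonneg δ) hσpos.le
  obtain ⟨sM, _, hMax⟩ := Finset.exists_max_image Finset.univ S Finset.univ_nonempty
  obtain ⟨sm, _, hMin⟩ := Finset.exists_min_image Finset.univ S Finset.univ_nonempty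
  set M := S sM with hM
  set m := S sm with hm
  have hEleM : E ≤ M := by
    calc E = ∑ t, p0 t * S t := rfl
      _ ≤ ∑ t, p0 t * M := Finset.sum_le_sum fun t _ =>
          mul_le_mul_of_nonneg_left (hMax t (Finset.mem_univ t)) (hpos t).le
      _ = M := by rw [← Finset.sum_mul, hsum, one_mul]
  have hmleE : m ≤ E := by
    calc m = ∑ t, p0 t * m := by rw [← Finset.sum_mul, hsum, one_mul]
      _ ≤ ∑ t, p0 t * S t := Finset.sum_le_sum fun t _ =>
          mul_le_mul_of_nonneg_left (hMin t (Finset.mem_univ t)) (hpos t).le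
      _ = E := rfl
  -- Bhatia–Davis
  have hBD : V ≤ (M - E) * (E - m) := by
    have hnn : 0 ≤ ∑ t, p0 t * ((M - S t) * (S t - m)) :=
      Finset.sum_nonneg fun t _ => mul_nonneg (hpos t).le
        (mul_nonneg (by linarith [hMax t (Finset.mem_univ t)])
          (by linarith [hMin t (Finset.mem_univ t)]))
    have hid : ∑ t, p0 t * ((M - S t) * (S t - m)) + V = (M - E) * (E - m) := by
      have hcongr : ∑ t, (p0 t * ((M - S t) * (S t - m)) + p0 t * (S t - E) ^ 2)
          = ∑ t, ((M + m - 2 * E) * (p0 t * S t) + (E ^ 2 - M * m) * p0 t) :=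
        Finset.sum_congr rfl fun t _ => by ring
      rw [hV, var0, ← Finset.sum_add_distrib, ← hE, hcongr, Finset.sum_add_distrib,
        ← Finset.mul_sum, ← Finset.mul_sum, hsum,
        show (∑ t, p0 t * S t) = E from rfl]
      ring
    linarith
  have haPos : 0 < M - E := by
    rcases lt_or_eq_of_le hEleM with h | h
    · linarith
    · exfalso; rw [← h] at hBD; simp at hBD; linarith
  have hbPos : 0 < E - m := by
    rcases lt_or_eq_of_le hmleE with h | h
    · linarith
    · exfalso; rw [h] at hBD; simp at hBD; linarith
  have hcsM : p0 sM * (M - E) ^ 2 ≤ (1 - p0 sM) * V :=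
    cs_bound p0 S (fun t => (hpos t).le) hsum sM
  have hcsm : p0 sm * (E - m) ^ 2 ≤ (1 - p0 sm) * V := by
    have h := cs_bound p0 S (fun t => (hpos t).le) hsum sm
    calc p0 sm * (E - m) ^ 2 = p0 sm * (S sm - E) ^ 2 := by rw [← hm]; ring
      _ ≤ (1 - p0 sm) * V := h
  have h1M : (0:ℝ) < 1 - p0 sM := by linarith [hplt sM]
  have h1m : (0:ℝ) < 1 - p0 sm := by linarith [hplt sm]
  -- δ² a² < V and δ² b² < V
  have hδa : δ ^ 2 * (M - E) ^ 2 < V := by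
    have h2' : (1 - p0 sM) * (δ ^ 2 * (M - E) ^ 2) < (1 - p0 sM) * V := by
      calc (1 - p0 sM) * (δ ^ 2 * (M - E) ^ 2)
          = δ ^ 2 * (1 - p0 sM) * (M - E) ^ 2 := by ring
        _ < p0 sM * (M - E) ^ 2 :=
            mul_lt_mul_of_pos_right (hkey sM) (by positivity)
        _ ≤ (1 - p0 sM) * V := hcsM
    exact lt_of_mul_lt_mul_left h2' h1M.le
  have hδb : δ ^ 2 * (E - m) ^ 2 < V := by
    have h2' : (1 - p0 sm) * (δ ^ 2 * (E - m) ^ 2) < (1 - p0 sm) * V := by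
      calc (1 - p0 sm) * (δ ^ 2 * (E - m) ^ 2)
          = δ ^ 2 * (1 - p0 sm) * (E - m) ^ 2 := by ring
        _ < p0 sm * (E - m) ^ 2 :=
            mul_lt_mul_of_pos_right (hkey sm) (by positivity)
        _ ≤ (1 - p0 sm) * V := hcsm
    exact lt_of_mul_lt_mul_left h2' h1m.le
  have hVsq : V * V ≤ (M - E) ^ 2 * (E - m) ^ 2 := by
    calc V * V ≤ ((M - E) * (E - m)) * ((M - E) * (E - m)) :=
        mul_le_mul hBD hBD hVnn (mul_nonneg haPos.le hbPos.le)
      _ = (M - E) ^ 2 * (E - m) ^ 2 := by ring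
  have hbsq : δ ^ 2 * V < (E - m) ^ 2 := by
    have h5 : (M - E) ^ 2 * (δ ^ 2 * V) < (M - E) ^ 2 * (E - m) ^ 2 := by
      calc (M - E) ^ 2 * (δ ^ 2 * V) = δ ^ 2 * (M - E) ^ 2 * V := by ring
        _ < V * V := mul_lt_mul_of_pos_right hδa hVpos
        _ ≤ (M - E) ^ 2 * (E - m) ^ 2 := hVsq
    exact lt_of_mul_lt_mul_left h5 (by positivity)
  have hasq : δ ^ 2 * V < (M - E) ^ 2 := by
    have h5 : (E - m) ^ 2 * (δ ^ 2 * V) < (E - m) ^ 2 * (M - E) ^ 2 := by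
      calc (E - m) ^ 2 * (δ ^ 2 * V) = δ ^ 2 * (E - m) ^ 2 * V := by ring
        _ < V * V := mul_lt_mul_of_pos_right hδb hVpos
        _ ≤ (M - E) ^ 2 * (E - m) ^ 2 := hVsq
        _ = (E - m) ^ 2 * (M - E) ^ 2 := by ring
    exact lt_of_mul_lt_mul_left h5 (by positivity)
  have hbgt : |δ| * Real.sqrt V < E - m := by
    have h6 : (|δ| * Real.sqrt V) ^ 2 < (E - m) ^ 2 := by
      rw [mul_pow, sq_abs, hσsq]; exact hbsq
    exact lt_of_pow_lt_pow_left₀ 2 hbPos.le h6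
  have hagt : |δ| * Real.sqrt V < M - E := by
    have h6 : (|δ| * Real.sqrt V) ^ 2 < (M - E) ^ 2 := by
      rw [mul_pow, sq_abs, hσsq]; exact hasq
    exact lt_of_pow_lt_pow_left₀ 2 haPos.le h6
  refine ⟨⟨sm, ?_⟩, by rw [hσ]; linarith, ⟨sM, ?_⟩⟩
  · rw [hσ]; linarith
  · rw [hσ]; linarith
end
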